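/- arXiv:2005.00780 — 3 statements merged into one kernel-verified Lean document; each statement's English description precedes it below -/
import Mathlib

section
/- Let Z be a power series distributed random variable with pmf p_k = a_k θ^k / γ(θ), and let f : ℤ₊ → ℝ be bounded. Define g(k) = (1/(k a_k θ^k)) Σ_{j=0}^{k-1} a_j θ^j (f(j) - E f(Z)) for k ≥ 1 and g(0) = 0. Then g satisfies the Stein equation θ(k+1)(a_{k+1}/a_k) g(k+1) - k g(k) = f(k) - E f(Z) for all k ∈ ℤ₊, and moreover g(k) = -(1/(k a_k θ^k)) Σ_{j=k}^∞ a_j θ^j (f(j) - E f(Z)). -/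
/-!
Write `w j = a j θ^j (f j - μ)` and `S k = ∑_{j<k} w j`. The defining formula says exactly that
`k a_k θ^k g k = S k` for every `k` (at `k = 0` both sides vanish), and the Stein operator
multiplied by `a_k θ^k` telescopes to `S (k+1) - S k = w k`. Since `μ = E f(Z)`, the full series
`∑ w j` is zero, so `S k` equals minus the tail `∑_{j ≥ k} w j`, which gives the second formula.
-/

open Finset

theorem HasSum.ite_le_sub_sum_range {G : Type*} [AddCommGroup G] [TopologicalSpace G]
    [IsTopologicalAddGroup G] {w : ℕ → G} {s : G} (hw : HasSum w s) (k : ℕ) :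
    HasSum (fun j => if k ≤ j then w j else 0) (s - ∑ j ∈ range k, w j) := by
  have hshift : HasSum (fun n => w (n + k)) (s - ∑ j ∈ range k, w j) :=
    (hasSum_nat_add_iff' k).mpr hw
  refine (add_left_injective k).hasSum_iff ?_ |>.mp ?_
  · rintro j hj
    have hjk : ¬ k ≤ j := fun h => hj ⟨j - k, Nat.sub_add_cancel h⟩
    simp [hjk]
  · simpa [Function.comp_def] using hshift

theorem hasSum_mul_sub_eq_zero {w f : ℕ → ℝ} {γ μ : ℝ} (hw : HasSum w γ) (hγ : γ ≠ 0)
    (hμ : HasSum (fun k => w k / γ * f k) μ) : HasSum (fun k => w k * (f k - μ)) 0 := by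
  have hwf : HasSum (fun k => w k * f k) (γ * μ) := by
    simpa only [← mul_assoc, mul_div_cancel₀ _ hγ] using hμ.mul_left γ
  simpa [mul_sub] using hwf.sub (hw.mul_right μ)

theorem stein_operator_eq_of_mul_eq_sum_range {a g h : ℕ → ℝ} {θ : ℝ} (hθ : θ ≠ 0)
    (ha : ∀ k, a k ≠ 0)
    (hg : ∀ k : ℕ, (k : ℝ) * a k * θ ^ k * g k = ∑ j ∈ range k, a j * θ ^ j * h j) (k : ℕ) :
    θ * (k + 1 : ℝ) * (a (k + 1) / a k) * g (k + 1) - (k : ℝ) * g k = h k := by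
  have hsucc := hg (k + 1)
  rw [sum_range_succ, ← hg k, pow_succ] at hsucc
  push_cast at hsucc
  have hcancel : a k * (a (k + 1) / a k) = a (k + 1) := mul_div_cancel₀ _ (ha k)
  apply mul_left_cancel₀ (mul_ne_zero (ha k) (pow_ne_zero k hθ))
  linear_combination hsucc + θ ^ k * θ * (k + 1) * g (k + 1) * hcancel

theorem psd_stein_solution_general (a : ℕ → ℝ) (θ γ : ℝ) (p : ℕ → ℝ)
    (hθ : 0 < θ) (ha : ∀ k, 0 < a k)
    (hγ : HasSum (fun k => a k * θ ^ k) γ) (hγ0 : 0 < γ)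
    (hp : ∀ k, p k = a k * θ ^ k / γ)
    (f : ℕ → ℝ)
    (μ : ℝ) (hμ : HasSum (fun k => p k * f k) μ)
    (g : ℕ → ℝ) (hg0 : g 0 = 0)
    (hg : ∀ k : ℕ, 1 ≤ k → g k =
      (1 / ((k : ℝ) * a k * θ ^ k)) *
        ∑ j ∈ Finset.range k, a j * θ ^ j * (f j - μ)) :
    (∀ k : ℕ,
      θ * (k + 1 : ℝ) * (a (k + 1) / a k) * g (k + 1) - (k : ℝ) * g k = f k - μ) ∧
    (∀ k : ℕ, 1 ≤ k → g k =
      -(1 / ((k : ℝ) * a k * θ ^ k)) *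
        ∑' j : ℕ, if k ≤ j then a j * θ ^ j * (f j - μ) else 0) := by
  have hmul : ∀ k : ℕ, (k : ℝ) * a k * θ ^ k * g k = ∑ j ∈ range k, a j * θ ^ j * (f j - μ) := by
    intro k
    rcases Nat.eq_zero_or_pos k with rfl | hk
    · simp [hg0]
    · have hc : (k : ℝ) * a k * θ ^ k ≠ 0 := by have := ha k; positivity
      rw [hg k hk, ← mul_assoc, mul_one_div_cancel hc, one_mul]
  have hcentered : HasSum (fun j => a j * θ ^ j * (f j - μ)) 0 :=
    hasSum_mul_sub_eq_zero hγ hγ0.ne' (by simpa only [hp] using hμ)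
  refine ⟨stein_operator_eq_of_mul_eq_sum_range hθ.ne' (fun k => (ha k).ne') hmul, fun k hk => ?_⟩
  rw [(hcentered.ite_le_sub_sum_range k).tsum_eq, hg k hk]
  ring

/-- Solution of the Stein equation for the power series distribution: with
`p k = a k θ^k / γ`, `μ = E f(Z)`, and
`g k = (1/(k a_k θ^k)) ∑_{j=0}^{k-1} a_j θ^j (f j - μ)` (with `g 0 = 0`),
`g` satisfies `θ (k+1) (a (k+1)/a k) g (k+1) - k g k = f k - μ` for all `k`,
and also `g k = -(1/(k a_k θ^k)) ∑_{j=k}^∞ a_j θ^j (f j - μ)`. -/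
theorem psd_stein_solution (a : ℕ → ℝ) (θ γ : ℝ) (p : ℕ → ℝ)
    (hθ : 0 < θ) (ha : ∀ k, 0 < a k)
    (hγ : HasSum (fun k => a k * θ ^ k) γ) (hγ0 : 0 < γ)
    (hp : ∀ k, p k = a k * θ ^ k / γ)
    (f : ℕ → ℝ) (hfbdd : ∃ M, ∀ k, |f k| ≤ M)
    (μ : ℝ) (hμ : HasSum (fun k => p k * f k) μ)
    (g : ℕ → ℝ) (hg0 : g 0 = 0)
    (hg : ∀ k : ℕ, 1 ≤ k → g k =
      (1 / ((k : ℝ) * a k * θ ^ k)) *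
        ∑ j ∈ Finset.range k, a j * θ ^ j * (f j - μ)) :
    (∀ k : ℕ,
      θ * (k + 1 : ℝ) * (a (k + 1) / a k) * g (k + 1) - (k : ℝ) * g k = f k - μ) ∧
    (∀ k : ℕ, 1 ≤ k → g k =
      -(1 / ((k : ℝ) * a k * θ ^ k)) *
        ∑' j : ℕ, if k ≤ j then a j * θ ^ j * (f j - μ) else 0) :=
  psd_stein_solution_general a θ γ p hθ ha hγ hγ0 hp f μ hμ g hg0 hg
end

section
/- Let Z be a power series distributed random variable with pmf p_k, cumulative distribution F(k) = Σ_{i=0}^k p_i and survival function F̄(k) = Σ_{i=k}^∞ p_i. If k·F(k)/F(k-1) ≥ θ(k+1)a_{k+1}/a_k ≥ k·F̄(k+1)/F̄(k) for all k ≥ 1, then the solution g_f of the Stein equation satisfies sup over f: ℤ₊ → [0,1] of |Δg_f(k)| equals (a_k/(θ(k+1)a_{k+1})) F̄(k+1) + (1/k) F(k-1), and consequently sup_f |Δg_f(k)| ≤ min{1/k, a_k/(θ(k+1)a_{k+1})}. -/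
/-! For `k ≥ 1` the map `f ↦ Δg_f(k)` is a linear functional `∑ⱼ cⱼ f(j)` whose coefficients
sum to zero, since constant test functions have zero Stein solution. The two monotonicity
conditions say exactly that `cⱼ ≤ 0` for `j > k` and for `j < k`. Hence on `[0,1]`-valued `f`
the functional lies in `[-c_k, c_k]`, and `f = 𝟙_{k}` attains `c_k`. Computing `c_k` gives the
stated value, and the same two conditions bound it by `1/k` and by `a_k/(θ(k+1)a_{k+1})`. -/

/-- The solution of the PSD Stein equation for a test function `f`:
`g_f 0 = 0`, `g_f k = (1/(k a_k θ^k)) ∑_{j<k} a_j θ^j (f j - E f(Z))`. -/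
noncomputable def psdSteinSol (a : ℕ → ℝ) (θ : ℝ) (p : ℕ → ℝ) (f : ℕ → ℝ) : ℕ → ℝ :=
  fun k =>
    if k = 0 then 0
    else (1 / ((k : ℝ) * a k * θ ^ k)) *
      ∑ j ∈ Finset.range k, a j * θ ^ j * (f j - ∑' i : ℕ, p i * f i)

open Finset

theorem abs_le_of_hasSum_mul {c f : ℕ → ℝ} {k : ℕ} {s : ℝ} (hc : HasSum c 0)
    (hneg : ∀ j ≠ k, c j ≤ 0) (hf : ∀ n, 0 ≤ f n ∧ f n ≤ 1)
    (hcf : HasSum (fun j => c j * f j) s) : |s| ≤ c k := by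
  have hck : 0 ≤ c k := by
    refine hasSum_le (fun j => ?_) hc (hasSum_pi_single k (c k))
    by_cases hj : j = k
    · simp [hj]
    · simpa [hj] using hneg j hj
  have hupper : s ≤ c k * f k := by
    refine hasSum_le (fun j => ?_) hcf (hasSum_pi_single k (c k * f k))
    by_cases hj : j = k
    · simp [hj]
    · simpa [hj] using mul_nonpos_of_nonpos_of_nonneg (hneg j hj) (hf j).1
  have hlower : c k * (f k - 1) ≤ s := by
    -- `∑ cⱼ = 0`, so `s = ∑ cⱼ (fⱼ - 1)`, where every term with `j ≠ k` is nonnegative.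
    have hcf' : HasSum (fun j => c j * (f j - 1)) s := by
      simpa only [mul_sub, mul_one, sub_zero] using hcf.sub hc
    refine hasSum_le (fun j => ?_) (hasSum_pi_single k (c k * (f k - 1))) hcf'
    by_cases hj : j = k
    · simp [hj]
    · simpa [hj] using mul_nonneg_of_nonpos_of_nonpos (hneg j hj) (sub_nonpos.2 (hf j).2)
  rw [abs_le]
  constructor <;> nlinarith [(hf k).1, (hf k).2]

theorem iSup_abs_eq_of_hasSum_mul (c : ℕ → ℝ) (L : (ℕ → ℝ) → ℝ) (k : ℕ) (hc : HasSum c 0)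
    (hneg : ∀ j ≠ k, c j ≤ 0)
    (hL : ∀ f : ℕ → ℝ, (∀ n, 0 ≤ f n ∧ f n ≤ 1) → HasSum (fun j => c j * f j) (L f)) :
    ⨆ f : {f : ℕ → ℝ // ∀ n, 0 ≤ f n ∧ f n ≤ 1}, |L f.1| = c k := by
  have hbound (f : {f : ℕ → ℝ // ∀ n, 0 ≤ f n ∧ f n ≤ 1}) : |L f.1| ≤ c k :=
    abs_le_of_hasSum_mul hc hneg f.2 (hL f.1 f.2)
  set δ : ℕ → ℝ := Pi.single k 1
  have hδ : ∀ n, 0 ≤ δ n ∧ δ n ≤ 1 := fun n => by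
    by_cases hn : n = k <;> simp [δ, hn]
  have hLδ : L δ = c k := by
    refine (hL δ hδ).unique ?_
    convert hasSum_pi_single k (c k) using 1
    ext j
    by_cases hj : j = k <;> simp [δ, hj]
  have : Nonempty {f : ℕ → ℝ // ∀ n, 0 ≤ f n ∧ f n ≤ 1} := ⟨⟨δ, hδ⟩⟩
  refine le_antisymm (ciSup_le hbound) ?_
  calc c k = |L δ| := by rw [hLδ, abs_of_nonneg ((abs_nonneg _).trans (hbound ⟨δ, hδ⟩))]
    _ ≤ _ := le_ciSup (f := fun f : {f : ℕ → ℝ // ∀ n, 0 ≤ f n ∧ f n ≤ 1} => |L f.1|)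
      ⟨c k, Set.forall_mem_range.2 hbound⟩ ⟨δ, hδ⟩

theorem hasSum_ite_le_sub_sum_range {g : ℕ → ℝ} {s : ℝ} (h : HasSum g s) (m : ℕ) :
    HasSum (fun i => if m ≤ i then g i else 0) (s - ∑ i ∈ range m, g i) := by
  have hhead : ∑ i ∈ range m, (if m ≤ i then g i else 0) = 0 :=
    sum_eq_zero fun i hi => if_neg (not_le.2 (mem_range.1 hi))
  rw [← hasSum_nat_add_iff' m, hhead, sub_zero]
  simpa using (hasSum_nat_add_iff' m).2 h

noncomputable def centeredPartialSum (p f : ℕ → ℝ) (m : ℕ) : ℝ :=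
  ∑ j ∈ range m, p j * (f j - ∑' i, p i * f i)

theorem hasSum_centeredPartialSum {p f : ℕ → ℝ} (hpf : Summable fun i => p i * f i) (m : ℕ) :
    HasSum (fun j => p j * ((if j < m then 1 else 0) - ∑ i ∈ range m, p i) * f j)
      (centeredPartialSum p f m) := by
  have hhead : HasSum (fun j => if j < m then p j * f j else 0) (∑ j ∈ range m, p j * f j) := by
    have h : HasSum (fun j => if j < m then p j * f j else 0)
        (∑ j ∈ range m, if j < m then p j * f j else 0) :=
      hasSum_sum_of_ne_finset_zero fun j hj => if_neg (by simpa using hj)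
    rwa [sum_congr rfl fun j hj => if_pos (mem_range.1 hj)] at h
  have hfun : (fun j => p j * ((if j < m then 1 else 0) - ∑ i ∈ range m, p i) * f j) =
      fun j => (if j < m then p j * f j else 0) - (∑ i ∈ range m, p i) * (p j * f j) := by
    funext j; split_ifs <;> ring
  have hval : centeredPartialSum p f m =
      ∑ j ∈ range m, p j * f j - (∑ i ∈ range m, p i) * ∑' i, p i * f i := by
    simp only [centeredPartialSum, mul_sub, sum_sub_distrib, sum_mul]
  rw [hfun, hval]
  exact hhead.sub (hpf.hasSum.mul_left _)

theorem iSup_abs_sub_centeredPartialSum {p : ℕ → ℝ} (hp : HasSum p 1) (hp0 : ∀ i, 0 ≤ p i)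
    (u v : ℝ) (k : ℕ)
    (hlow : v * ∑ i ∈ range k, p i ≤ u * ∑ i ∈ range (k + 1), p i)
    (hup : u * (1 - ∑ i ∈ range (k + 1), p i) ≤ v * (1 - ∑ i ∈ range k, p i)) :
    ⨆ f : {f : ℕ → ℝ // ∀ n, 0 ≤ f n ∧ f n ≤ 1},
        |u * centeredPartialSum p f.1 (k + 1) - v * centeredPartialSum p f.1 k| =
      p k * (u * (1 - ∑ i ∈ range (k + 1), p i) + v * ∑ i ∈ range k, p i) := by
  set c : ℕ → ℝ := fun j => u * (p j * ((if j < k + 1 then 1 else 0) - ∑ i ∈ range (k + 1), p i))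
    - v * (p j * ((if j < k then 1 else 0) - ∑ i ∈ range k, p i))
  have hL (f : ℕ → ℝ) (hf : ∀ n, 0 ≤ f n ∧ f n ≤ 1) : HasSum (fun j => c j * f j)
      (u * centeredPartialSum p f (k + 1) - v * centeredPartialSum p f k) := by
    have hpf : Summable fun i => p i * f i := .of_nonneg_of_le
      (fun i => mul_nonneg (hp0 i) (hf i).1) (fun i => mul_le_of_le_one_right (hp0 i) (hf i).2)
      hp.summable
    have hcf : (fun j => c j * f j) = fun j =>
        u * (p j * ((if j < k + 1 then 1 else 0) - ∑ i ∈ range (k + 1), p i) * f j) -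
          v * (p j * ((if j < k then 1 else 0) - ∑ i ∈ range k, p i) * f j) := by
      funext j; simp only [c]; ring
    rw [hcf]
    exact ((hasSum_centeredPartialSum hpf (k + 1)).mul_left u).sub
      ((hasSum_centeredPartialSum hpf k).mul_left v)
  have hc : HasSum c 0 := by
    have hconst (m : ℕ) : centeredPartialSum p (fun _ => 1) m = 0 := by
      simp [centeredPartialSum, hp.tsum_eq]
    simpa [hconst] using hL (fun _ => 1) fun _ => ⟨zero_le_one, le_rfl⟩
  rw [iSup_abs_eq_of_hasSum_mul c _ k hc ?_ hL]
  · simp only [c, lt_add_one, lt_irrefl, if_true, if_false]; ring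
  intro j hj
  rcases lt_or_gt_of_ne hj with hjk | hjk
  · have : c j = p j * (u * (1 - ∑ i ∈ range (k + 1), p i) - v * (1 - ∑ i ∈ range k, p i)) := by
      simp only [c, hjk, Nat.lt_succ_of_lt hjk, if_true]; ring
    rw [this]; exact mul_nonpos_of_nonneg_of_nonpos (hp0 j) (by linarith)
  · have : c j = p j * (v * ∑ i ∈ range k, p i - u * ∑ i ∈ range (k + 1), p i) := by
      simp only [c, if_neg (by omega : ¬j < k + 1), if_neg (by omega : ¬j < k)]; ring
    rw [this]; exact mul_nonpos_of_nonneg_of_nonpos (hp0 j) (by linarith)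

theorem div_add_div_le_min {x y r s : ℝ} (hr : 0 < r) (hs : 0 < s) (h1 : r * x ≤ s * y)
    (h2 : s * (1 - y) ≤ r * (1 - x)) : 1 / r * (1 - y) + 1 / s * x ≤ min (1 / s) (1 / r) := by
  refine le_min ?_ ?_
  · rw [div_mul_eq_mul_div, div_mul_eq_mul_div, one_mul, one_mul, div_add_div _ _ hr.ne' hs.ne',
      div_le_div_iff₀ (by positivity) hs]
    nlinarith
  · rw [div_mul_eq_mul_div, div_mul_eq_mul_div, one_mul, one_mul, div_add_div _ _ hr.ne' hs.ne',
      div_le_div_iff₀ (by positivity) hr]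
    nlinarith

theorem iSup_abs_sub_centeredPartialSum_div {p : ℕ → ℝ} (hp : HasSum p 1)
    (hpos : ∀ i, 0 < p i) {k : ℕ} (hk : 1 ≤ k) {r : ℝ} (hr : (k + 1) * p (k + 1) = r * p k)
    (h1 : (k : ℝ) * (∑ i ∈ range (k + 1), p i) / (∑ i ∈ range k, p i) ≥ r)
    (h2 : r ≥ (k : ℝ) * (1 - ∑ i ∈ range (k + 1), p i) / (1 - ∑ i ∈ range k, p i)) :
    (⨆ f : {f : ℕ → ℝ // ∀ n, 0 ≤ f n ∧ f n ≤ 1},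
        |centeredPartialSum p f.1 (k + 1) / ((k + 1) * p (k + 1)) -
          centeredPartialSum p f.1 k / (k * p k)|) =
      1 / r * (1 - ∑ i ∈ range (k + 1), p i) + 1 / (k : ℝ) * ∑ i ∈ range k, p i ∧
    1 / r * (1 - ∑ i ∈ range (k + 1), p i) + 1 / (k : ℝ) * ∑ i ∈ range k, p i ≤
      min (1 / (k : ℝ)) (1 / r) := by
  have hk0 : (0 : ℝ) < k := by exact_mod_cast hk
  have hr0 : 0 < r := pos_of_mul_pos_left (hr ▸ mul_pos (by positivity) (hpos (k + 1))) (hpos k).le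
  have hhead : 0 < ∑ i ∈ range k, p i :=
    sum_pos (fun i _ => hpos i) (nonempty_range_iff.2 (by omega))
  have htail : 0 < 1 - ∑ i ∈ range k, p i := by
    have := sum_le_hasSum (range (k + 1)) (fun i _ => (hpos i).le) hp
    rw [sum_range_succ] at this
    linarith [hpos k]
  rw [ge_iff_le, le_div_iff₀ hhead] at h1
  rw [ge_iff_le, div_le_iff₀ htail] at h2
  refine ⟨?_, div_add_div_le_min hr0 hk0 h1 h2⟩
  have hu (x : ℝ) : x / ((k + 1) * p (k + 1)) = (r * p k)⁻¹ * x := by rw [hr]; ring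
  have hv (x : ℝ) : x / (k * p k) = (k * p k)⁻¹ * x := by ring
  have hpk : 0 < p k := hpos k
  simp only [hu, hv]
  rw [iSup_abs_sub_centeredPartialSum hp (fun i => (hpos i).le)]
  · field_simp
  · field_simp
    linarith
  · field_simp
    linarith

theorem psdSteinSol_eq_centeredPartialSum_div {a : ℕ → ℝ} {θ γ : ℝ} {p : ℕ → ℝ} (hγ : γ ≠ 0)
    (hp : ∀ k, p k = a k * θ ^ k / γ) (f : ℕ → ℝ) {m : ℕ} (hm : m ≠ 0) :
    psdSteinSol a θ p f m = centeredPartialSum p f m / (m * p m) := by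
  have hq (j : ℕ) : a j * θ ^ j = γ * p j := by rw [hp, mul_div_cancel₀ _ hγ]
  simp only [psdSteinSol, if_neg hm, centeredPartialSum, mul_assoc, hq, ← mul_sum]
  field_simp

/-- Uniform and exact bounds on the forward difference of the PSD Stein solution:
under the monotonicity condition
`k F(k)/F(k-1) ≥ θ (k+1) a_{k+1}/a_k ≥ k F̄(k+1)/F̄(k)`,
the supremum over `f : ℕ → [0,1]` of `|Δ g_f (k)|` equals
`(a_k/(θ (k+1) a_{k+1})) F̄(k+1) + (1/k) F(k-1)`, and hence is at most
`min (1/k) (a_k/(θ (k+1) a_{k+1}))`. -/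
theorem psd_stein_factor_bound (a : ℕ → ℝ) (θ γ : ℝ) (p : ℕ → ℝ)
    (hθ : 0 < θ) (ha : ∀ k, 0 < a k)
    (hγ : HasSum (fun k => a k * θ ^ k) γ) (hγ0 : 0 < γ)
    (hp : ∀ k, p k = a k * θ ^ k / γ)
    (F Fbar : ℕ → ℝ)
    (hF : ∀ k, F k = ∑ i ∈ Finset.range (k + 1), p i)
    (hFbar : ∀ k, Fbar k = ∑' i : ℕ, if k ≤ i then p i else 0)
    (hmono : ∀ k : ℕ, 1 ≤ k →
      (k : ℝ) * F k / F (k - 1) ≥ θ * (k + 1 : ℝ) * (a (k + 1) / a k) ∧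
      θ * (k + 1 : ℝ) * (a (k + 1) / a k) ≥ (k : ℝ) * Fbar (k + 1) / Fbar k) :
    ∀ k : ℕ, 1 ≤ k →
      (⨆ f : {f : ℕ → ℝ // ∀ n, 0 ≤ f n ∧ f n ≤ 1},
          |psdSteinSol a θ p f.1 (k + 1) - psdSteinSol a θ p f.1 k|) =
        (a k / (θ * (k + 1 : ℝ) * a (k + 1))) * Fbar (k + 1) + (1 / (k : ℝ)) * F (k - 1) ∧
      (⨆ f : {f : ℕ → ℝ // ∀ n, 0 ≤ f n ∧ f n ≤ 1},
          |psdSteinSol a θ p f.1 (k + 1) - psdSteinSol a θ p f.1 k|) ≤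
        min (1 / (k : ℝ)) (a k / (θ * (k + 1 : ℝ) * a (k + 1))) := by
  intro k hk
  have hpos (i : ℕ) : 0 < p i := hp i ▸ div_pos (mul_pos (ha i) (pow_pos hθ i)) hγ0
  have hp1 : HasSum p 1 := by simpa [← hp, div_self hγ0.ne'] using hγ.div_const γ
  have hFbar' (m : ℕ) : Fbar m = 1 - ∑ i ∈ range m, p i :=
    (hFbar m).trans (hasSum_ite_le_sub_sum_range hp1 m).tsum_eq
  have hFk : F (k - 1) = ∑ i ∈ range k, p i := by rw [hF, Nat.sub_add_cancel hk]
  have hr : (k + 1) * p (k + 1) = θ * (k + 1 : ℝ) * (a (k + 1) / a k) * p k := by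
    rw [hp, hp]; field_simp [(ha k).ne']; ring
  have hinv : a k / (θ * (k + 1 : ℝ) * a (k + 1)) = 1 / (θ * (k + 1 : ℝ) * (a (k + 1) / a k)) := by
    rw [mul_div_assoc', one_div_div]
  have hΔ (f : ℕ → ℝ) : psdSteinSol a θ p f (k + 1) - psdSteinSol a θ p f k =
      centeredPartialSum p f (k + 1) / ((k + 1) * p (k + 1)) -
        centeredPartialSum p f k / (k * p k) := by
    rw [psdSteinSol_eq_centeredPartialSum_div hγ0.ne' hp f (by omega),
      psdSteinSol_eq_centeredPartialSum_div hγ0.ne' hp f (by omega)]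
    push_cast; rfl
  obtain ⟨h1, h2⟩ := hmono k hk
  simp only [hFk, hF, hFbar'] at h1 h2
  obtain ⟨hsup, hmin⟩ := iSup_abs_sub_centeredPartialSum_div hp1 hpos hk hr h1 h2
  simp only [hΔ, hFk, hFbar', hinv, hsup, hmin, and_self]
end

section
/- Let X₁,…,X_n be ℤ₊-valued 1-dependent random variables, W_n = Σᵢ Xᵢ, and Z a random variable in the Panjer class (Stein operator (a+bk)g(k+1) - kg(k), b < 1) with E(Z) = E(W_n). Then d_TV(W_n, Z) ≤ (2|1-b| ‖g‖ + ‖Δg‖) Σ_{i=1}^n E(Xᵢ), where ‖g‖ and ‖Δg‖ are uniform bounds on the Stein solution and its forward difference over indicator test functions. -/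
open scoped Classical

open MeasureTheory ProbabilityTheory

/-!
Take `A = {k | P(Z = k) ≤ P(W = k)}`, so that `d_TV(W, Z) = P(W ∈ A) - P(Z ∈ A)`, which is the
expectation of the Stein operator applied to `g_A` at `W`. Summing the Panjer recursion gives
`a = (1 - b) E Z = (1 - b) E W`, so this operator equals
`(1 - b) (E W - W) g_A(W + 1) + W Δg_A(W)`, whose expectation is bounded by
`2 |1 - b| ‖g‖ E W + ‖Δg‖ E W`.
-/

section Panjer

variable {p : ℕ → ℝ} {a b : ℝ}

theorem summable_mul_cast_of_panjer (hp : ∀ k, 0 ≤ p k) (hb : b < 1)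
    (hrec : ∀ k : ℕ, (k + 1 : ℝ) * p (k + 1) = (a + b * k) * p k) :
    Summable fun k : ℕ => p k * k := by
  obtain ⟨r, hbr, hr1⟩ := exists_between hb
  have hlarge : ∀ᶠ k : ℕ in Filter.atTop, a ≤ (r - b) * k :=
    (tendsto_natCast_atTop_atTop.const_mul_atTop (sub_pos.2 hbr)).eventually_ge_atTop a
  refine summable_of_ratio_norm_eventually_le hr1 ?_
  filter_upwards [hlarge] with k hk
  rw [Real.norm_of_nonneg (mul_nonneg (hp _) (Nat.cast_nonneg _)),
    Real.norm_of_nonneg (mul_nonneg (hp k) (Nat.cast_nonneg _))]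
  push_cast
  nlinarith [hrec k, hp k]

theorem panjer_param_eq_mul_mean (hp : ∀ k, 0 ≤ p k) (hp1 : HasSum p 1) (hb : b < 1)
    (hrec : ∀ k : ℕ, (k + 1 : ℝ) * p (k + 1) = (a + b * k) * p k) :
    a = (1 - b) * ∑' k : ℕ, p k * k := by
  obtain ⟨M, hM⟩ := summable_mul_cast_of_panjer hp hb hrec
  have hshift : HasSum (fun k : ℕ => p (k + 1) * ↑(k + 1)) M := by
    simpa using (hasSum_nat_add_iff' 1).mpr hM
  have hshift' : (fun k : ℕ => p (k + 1) * ↑(k + 1)) = fun k => a * p k + b * (p k * k) :=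
    funext fun k => by push_cast; linear_combination hrec k
  have hM' : M = a * 1 + b * M :=
    hshift.unique (hshift' ▸ (hp1.mul_left a).add (hM.mul_left b))
  rw [hM.tsum_eq]
  linear_combination -hM'

end Panjer

theorem tsum_abs_sub_eq_two_mul_tsum_indicator {ι : Type*} {p q : ι → ℝ}
    (hp : Summable p) (hq : Summable q) (hpq : ∑' i, p i = ∑' i, q i) :
    ∑' i, |q i - p i| = 2 * ∑' i, {i | p i ≤ q i}.indicator (q - p) i := by
  have hpos : ∀ i, |q i - p i| = 2 * {i | p i ≤ q i}.indicator (q - p) i - (q - p) i := by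
    intro i
    by_cases h : p i ≤ q i
    · rw [Set.indicator_of_mem (show i ∈ {i | p i ≤ q i} from h), abs_of_nonneg (sub_nonneg.2 h),
        Pi.sub_apply]
      ring
    · rw [Set.indicator_of_notMem (show i ∉ {i | p i ≤ q i} from h),
        abs_of_neg (sub_neg.2 (not_le.1 h)), Pi.sub_apply]
      ring
  have hdiff : Summable (q - p) := hq.sub hp
  have hzero : ∑' i, (q - p) i = 0 := by
    simp only [Pi.sub_apply]
    rw [hq.tsum_sub hp, hpq, sub_self]
  rw [tsum_congr hpos, ((hdiff.indicator _).mul_left 2).tsum_sub hdiff, tsum_mul_left, hzero,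
    sub_zero]

theorem hasSum_indicator_measureReal_preimage_singleton {Ω : Type*} [MeasurableSpace Ω]
    (μ : Measure Ω) [IsFiniteMeasure μ] {W : Ω → ℕ} (hW : Measurable W) (A : Set ℕ) :
    HasSum (A.indicator fun k => μ.real (W ⁻¹' {k})) (μ.real (W ⁻¹' A)) := by
  rw [← hasSum_subtype_iff_indicator]
  have hA := tsum_measure_preimage_singleton (μ := μ) A.to_countable
    (fun k _ => hW (measurableSet_singleton k))
  have hfin : ∑' k : A, μ (W ⁻¹' {(k : ℕ)}) ≠ ⊤ := hA ▸ measure_ne_top μ _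
  rw [measureReal_def, ← hA, ENNReal.tsum_toReal_eq fun _ => measure_ne_top μ _]
  exact ENNReal.hasSum_toReal hfin

theorem integral_comp_eq_measureReal_preimage_sub {Ω : Type*} [MeasurableSpace Ω]
    {μ : Measure Ω} [IsProbabilityMeasure μ] {W : Ω → ℕ} (hW : Measurable W) {φ : ℕ → ℝ}
    {A : Set ℕ} {c : ℝ} (hφ : ∀ k, φ k = (if k ∈ A then 1 else 0) - c) :
    ∫ ω, φ (W ω) ∂μ = μ.real (W ⁻¹' A) - c := by
  have hWA : MeasurableSet (W ⁻¹' A) := hW MeasurableSet.of_discrete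
  calc _ = ∫ ω, ((W ⁻¹' A).indicator 1 ω - c) ∂μ := by
        refine integral_congr_ae (ae_of_all _ fun ω => ?_)
        simp only [hφ, Set.indicator_apply, Set.mem_preimage, Pi.one_apply]
    _ = _ := by
        rw [integral_sub ?_ (integrable_const c), integral_indicator_one hWA, integral_const,
          probReal_univ, one_smul]
        exact (integrable_const 1).indicator hWA

theorem abs_integral_panjer_stein_le {Ω : Type*} [MeasurableSpace Ω] {μ : Measure Ω}
    [IsProbabilityMeasure μ] {W : Ω → ℕ} (hW : Integrable (fun ω => (W ω : ℝ)) μ)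
    {a b G D : ℝ} (ha : a = (1 - b) * ∫ ω, (W ω : ℝ) ∂μ) {g : ℕ → ℝ}
    (hg : ∀ k, |g k| ≤ G) (hΔg : ∀ k, |g (k + 1) - g k| ≤ D) :
    |∫ ω, ((a + b * W ω) * g (W ω + 1) - W ω * g (W ω)) ∂μ| ≤
      (2 * |1 - b| * G + D) * ∫ ω, (W ω : ℝ) ∂μ := by
  set m := ∫ ω, (W ω : ℝ) ∂μ
  have hm : 0 ≤ m := integral_nonneg fun ω => by positivity
  have hmW_int : Integrable (fun ω => |1 - b| * G * (m + W ω)) μ :=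
    ((integrable_const m).add hW).const_mul _
  have hDW_int : Integrable (fun ω => D * W ω) μ := hW.const_mul D
  rw [← Real.norm_eq_abs]
  calc _ ≤ ∫ ω, (|1 - b| * G * (m + W ω) + D * W ω) ∂μ := by
        refine norm_integral_le_of_norm_le (hmW_int.add hDW_int)
          (Filter.Eventually.of_forall fun ω => ?_)
        have hsplit : (a + b * W ω) * g (W ω + 1) - W ω * g (W ω) =
            (1 - b) * (m - W ω) * g (W ω + 1) + W ω * (g (W ω + 1) - g (W ω)) := by
          rw [ha]; ring
        have hW0 : (0 : ℝ) ≤ W ω := Nat.cast_nonneg _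
        have hmW : |m - W ω| ≤ m + W ω := abs_le.2 ⟨by linarith, by linarith⟩
        rw [Real.norm_eq_abs, hsplit]
        calc _ ≤ |1 - b| * |m - W ω| * |g (W ω + 1)| + W ω * |g (W ω + 1) - g (W ω)| := by
              refine (abs_add_le _ _).trans_eq ?_
              rw [abs_mul, abs_mul, abs_mul, abs_of_nonneg hW0]
          _ ≤ |1 - b| * (m + W ω) * G + W ω * D := by
              gcongr
              exacts [hg _, hΔg _]
          _ = _ := by ring
    _ = _ := by
        rw [integral_add hmW_int hDW_int, integral_const_mul, integral_const_mul,
          integral_add (integrable_const m) hW, integral_const]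
        simp only [probReal_univ, one_smul]
        ring

theorem crude_dtv_bound_general {Ω : Type*} [MeasurableSpace Ω]
    (μ : Measure Ω) [IsProbabilityMeasure μ] (n : ℕ)
    (X : ℕ → Ω → ℕ) (hmeas : ∀ i, Measurable (X i))
    (hint : ∀ i, Integrable (fun ω => (X i ω : ℝ)) μ)
    (W : Ω → ℕ) (hW : ∀ ω, W ω = ∑ i ∈ Finset.Icc 1 n, X i ω)
    (pZ : ℕ → ℝ) (hZ0 : ∀ k, 0 ≤ pZ k) (hZ1 : HasSum pZ 1)
    (a b : ℝ) (hb : b < 1)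
    (hpanjer : ∀ k : ℕ, (k + 1 : ℝ) * pZ (k + 1) = (a + b * k) * pZ k)
    (hmean : (∑' k : ℕ, pZ k * (k : ℝ)) = ∫ ω, ((W ω : ℝ)) ∂μ)
    (G Dg : ℝ)
    (hstein : ∀ A : Set ℕ, ∃ gA : ℕ → ℝ,
      (∀ k : ℕ, (a + b * k) * gA (k + 1) - (k : ℝ) * gA k =
        (if k ∈ A then (1 : ℝ) else 0) -
          ∑' j : ℕ, pZ j * (if j ∈ A then (1 : ℝ) else 0)) ∧
      (∀ k, |gA k| ≤ G) ∧ (∀ k, |gA (k + 1) - gA k| ≤ Dg)) :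
    (1 / 2) * ∑' k : ℕ, |(μ (W ⁻¹' {k})).toReal - pZ k| ≤
      (2 * |1 - b| * G + Dg) * ∑ i ∈ Finset.Icc 1 n, ∫ ω, (X i ω : ℝ) ∂μ := by
  have hWmeas : Measurable W := funext hW ▸ Finset.measurable_sum _ fun i _ => hmeas i
  have hWcast : (fun ω => (W ω : ℝ)) = fun ω => ∑ i ∈ Finset.Icc 1 n, (X i ω : ℝ) :=
    funext fun ω => by rw [hW]; push_cast; rfl
  have hWint : Integrable (fun ω => (W ω : ℝ)) μ :=
    hWcast ▸ integrable_finsetSum _ fun i _ => hint i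
  have hEW : ∫ ω, (W ω : ℝ) ∂μ = ∑ i ∈ Finset.Icc 1 n, ∫ ω, (X i ω : ℝ) ∂μ := by
    rw [hWcast]; exact integral_finsetSum _ fun i _ => hint i
  set q : ℕ → ℝ := fun k => μ.real (W ⁻¹' {k})
  have hq : HasSum q 1 := by
    simpa using hasSum_indicator_measureReal_preimage_singleton μ hWmeas Set.univ
  set A := {k | pZ k ≤ q k}
  obtain ⟨g, hgA, hgG, hgD⟩ := hstein A
  have hTV := tsum_abs_sub_eq_two_mul_tsum_indicator hZ1.summable hq.summable
    (hZ1.tsum_eq.trans hq.tsum_eq.symm)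
  have hsteinW := integral_comp_eq_measureReal_preimage_sub (μ := μ)
    (φ := fun k : ℕ => (a + b * k) * g (k + 1) - k * g k) hWmeas hgA
  have hmassA : ∑' k, A.indicator (q - pZ) k =
      μ.real (W ⁻¹' A) - ∑' j, pZ j * (if j ∈ A then (1 : ℝ) else 0) := by
    simp only [Set.indicator_sub', Pi.sub_apply, mul_ite, mul_one, mul_zero,
      ← Set.indicator_apply]
    rw [(hq.summable.indicator A).tsum_sub (hZ1.summable.indicator A),
      (hasSum_indicator_measureReal_preimage_singleton μ hWmeas A).tsum_eq]
  have hbound := abs_integral_panjer_stein_le hWint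
    ((panjer_param_eq_mul_mean hZ0 hZ1 hb hpanjer).trans (by rw [hmean])) hgG hgD
  rw [← hEW]
  change (1 / 2) * ∑' k, |q k - pZ k| ≤ _
  rw [hTV, hmassA, ← hsteinW]
  linarith [le_abs_self (∫ ω, ((a + b * W ω) * g (W ω + 1) - W ω * g (W ω)) ∂μ)]

/-- Crude total variation bound for the Panjer-class approximation of a sum of
ℕ-valued 1-dependent random variables:
`d_TV(W_n, Z) ≤ (2 |1-b| ‖g‖ + ‖Δg‖) ∑ᵢ E Xᵢ`, where `‖g‖` and `‖Δg‖` are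
uniform bounds on the Stein solutions for indicator test functions. -/
theorem crude_dtv_bound {Ω : Type*} [MeasurableSpace Ω]
    (μ : Measure Ω) [IsProbabilityMeasure μ] (n : ℕ)
    (X : ℕ → Ω → ℕ) (hmeas : ∀ i, Measurable (X i))
    (hint : ∀ i, Integrable (fun ω => (X i ω : ℝ)) μ)
    (hdep : ∀ i j : ℕ, 1 ≤ i → i + 1 < j →
      Indep (⨆ k ∈ Finset.Icc 1 i, MeasurableSpace.comap (X k) inferInstance)
            (⨆ k ∈ Set.Ici j, MeasurableSpace.comap (X k) inferInstance) μ)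
    (W : Ω → ℕ) (hW : ∀ ω, W ω = ∑ i ∈ Finset.Icc 1 n, X i ω)
    (pZ : ℕ → ℝ) (hZ0 : ∀ k, 0 ≤ pZ k) (hZ1 : HasSum pZ 1)
    (a b : ℝ) (ha : 0 < a) (hb : b < 1)
    (hpanjer : ∀ k : ℕ, (k + 1 : ℝ) * pZ (k + 1) = (a + b * k) * pZ k)
    (hmean : (∑' k : ℕ, pZ k * (k : ℝ)) = ∫ ω, ((W ω : ℝ)) ∂μ)
    (G Dg : ℝ)
    (hstein : ∀ A : Set ℕ, ∃ gA : ℕ → ℝ,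
      (∀ k : ℕ, (a + b * k) * gA (k + 1) - (k : ℝ) * gA k =
        (if k ∈ A then (1 : ℝ) else 0) -
          ∑' j : ℕ, pZ j * (if j ∈ A then (1 : ℝ) else 0)) ∧
      (∀ k, |gA k| ≤ G) ∧ (∀ k, |gA (k + 1) - gA k| ≤ Dg)) :
    (1 / 2) * ∑' k : ℕ, |(μ (W ⁻¹' {k})).toReal - pZ k| ≤
      (2 * |1 - b| * G + Dg) * ∑ i ∈ Finset.Icc 1 n, ∫ ω, (X i ω : ℝ) ∂μ :=
  crude_dtv_bound_general μ n X hmeas hint W hW pZ hZ0 hZ1 a b hb hpanjer hmean G Dg hstein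
end
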